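/- arXiv:1906.08052 — 6 statements merged into one kernel-verified Lean document; each statement's English description precedes it below -/
import Mathlib

section
/- Let T be a digraph with t ≥ 2 vertices and let H_1, ..., H_t each be a digraph with at least two vertices. If T has a Hamiltonian cycle, then the composition Q = T[H_1, ..., H_t] has a good pair rooted at every vertex of Q. -/
variable {V : Type*}

/-- A digraph (given by its arc relation) is strongly connected. -/
def Strong (A : V → V → Prop) : Prop :=
  ∀ x y : V, Relation.ReflTransGen A x y

/-- `B` is an out-branching of the digraph `A` rooted at `r`:
a spanning subdigraph in which every vertex is reachable from `r`,
every vertex other than `r` has in-degree exactly one, and `r` has in-degree zero. -/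
def IsOutBranching (A B : V → V → Prop) (r : V) : Prop :=
  (∀ x y, B x y → A x y) ∧
  (∀ v, Relation.ReflTransGen B r v) ∧
  (∀ v, v ≠ r → Nat.card {u : V // B u v} = 1) ∧
  (∀ u, ¬ B u r)

/-- `B` is an in-branching of the digraph `A` rooted at `r`. -/
def IsInBranching (A B : V → V → Prop) (r : V) : Prop :=
  (∀ x y, B x y → A x y) ∧
  (∀ v, Relation.ReflTransGen B v r) ∧
  (∀ v, v ≠ r → Nat.card {u : V // B v u} = 1) ∧
  (∀ u, ¬ B r u)

/-- A good pair rooted at `r`: arc-disjoint out- and in-branchings rooted at `r`. -/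
def GoodPair (A : V → V → Prop) (r : V) : Prop :=
  ∃ Bp Bm : V → V → Prop, IsOutBranching A Bp r ∧ IsInBranching A Bm r ∧
    ∀ x y, ¬ (Bp x y ∧ Bm x y)

/-- Arc relation of the composition `T[H_1, …, H_t]`. -/
def CompArc {t : ℕ} (T : Fin t → Fin t → Prop) (n : Fin t → ℕ)
    (H : ∀ i : Fin t, Fin (n i) → Fin (n i) → Prop)
    (x y : (i : Fin t) × Fin (n i)) : Prop :=
  (∃ h : x.1 = y.1, H y.1 (h ▸ x.2) y.2) ∨ (x.1 ≠ y.1 ∧ T x.1 y.1)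

/-- A semicomplete digraph: some arc between every pair of distinct vertices. -/
def Semicomplete {α : Type*} (T : α → α → Prop) : Prop :=
  ∀ x y : α, x ≠ y → T x y ∨ T y x

/-- `T` has a Hamiltonian cycle. -/
def HasHamCycle {α : Type*} (T : α → α → Prop) : Prop :=
  ∃ l : List α, l.Nodup ∧ (∀ v : α, v ∈ l) ∧ l.Chain' T ∧
    ∀ a b, l.head? = some a → l.getLast? = some b → T b a

/-!
Number the classes along the Hamiltonian cycle so that the root `r` lies in class `0`, and pick
two vertices `a k ≠ b k` in each class `k`. Both branchings use only arcs from class `k` to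
class `k + 1`. In the out-branching `r` is the parent of all of class `1`, and further along
`b (k + 1)` hangs below `a k` while every other vertex of class `k + 1` hangs below `b k`. In the
in-branching all of the last class points to `r`, `a k` points to `a (k + 1)` for `k ≠ 0`, and
every other vertex points to `b (k + 1)`. Away from `r` the out-branching only has arcs
`a → b` and `b → (not b)`, the in-branching only `a → a` and `(not a) → b` (with `a 0` counted
as not `a`), so they are arc-disjoint.
-/

theorem Relation.reflTransGen_of_parent {B : V → V → Prop} {r : V} (p : V → V) (M : V → ℕ)
    (hB : ∀ y, y ≠ r → B (p y) y) (hM : ∀ y, y ≠ r → M (p y) < M y) (y : V) :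
    Relation.ReflTransGen B r y := by
  induction y using (measure M).wf.induction with
  | h y ih =>
    by_cases hy : y = r
    · exact hy ▸ .refl
    · exact (ih (p y) (hM y hy)).tail (hB y hy)

theorem isOutBranching_of_parent {A : V → V → Prop} {r : V} (p : V → V) (M : V → ℕ)
    (hA : ∀ y, y ≠ r → A (p y) y) (hM : ∀ y, y ≠ r → M (p y) < M y) :
    IsOutBranching A (fun x y => y ≠ r ∧ p y = x) r :=
  ⟨fun _ y h => h.2 ▸ hA y h.1,
    Relation.reflTransGen_of_parent p M (fun _ hy => ⟨hy, rfl⟩) hM,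
    fun _ hv => Nat.card_eq_one_iff_unique.mpr
      ⟨⟨fun u w => Subtype.ext (u.2.2.symm.trans w.2.2)⟩, ⟨⟨_, hv, rfl⟩⟩⟩,
    fun _ h => h.1 rfl⟩

theorem IsInBranching.of_isOutBranching_swap {A B : V → V → Prop} {r : V}
    (h : IsOutBranching (Function.swap A) (Function.swap B) r) : IsInBranching A B r :=
  ⟨fun x y hB => h.1 y x hB, fun v => Relation.reflTransGen_swap.mp (h.2.1 v), h.2.2.1, h.2.2.2⟩

theorem isInBranching_of_child {A : V → V → Prop} {r : V} (c : V → V) (N : V → ℕ)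
    (hA : ∀ x, x ≠ r → A x (c x)) (hN : ∀ x, x ≠ r → N (c x) < N x) :
    IsInBranching A (fun x y => x ≠ r ∧ c x = y) r :=
  .of_isOutBranching_swap (isOutBranching_of_parent (A := Function.swap A) c N hA hN)

theorem goodPair_of_parent_child {A : V → V → Prop} {r : V} (p c : V → V) (M N : V → ℕ)
    (hpA : ∀ y, y ≠ r → A (p y) y) (hpM : ∀ y, y ≠ r → M (p y) < M y)
    (hcA : ∀ x, x ≠ r → A x (c x)) (hcN : ∀ x, x ≠ r → N (c x) < N x)
    (hpc : ∀ y, y ≠ r → p y ≠ r → c (p y) ≠ y) :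
    GoodPair A r :=
  ⟨_, _, isOutBranching_of_parent p M hpA hpM, isInBranching_of_child c N hcA hcN,
    fun _ y ⟨⟨hy, hpy⟩, hx, hcx⟩ => hpc y hy (hpy ▸ hx) (hpy ▸ hcx)⟩

section CyclicLevels

variable [DecidableEq V] {m : ℕ} (f : V → Fin (m + 1)) (a b : Fin (m + 1) → V) (r : V)

def blowupParent (y : V) : V :=
  if f y = 1 then r else if y = b (f y) then a (f y - 1) else b (f y - 1)

def blowupChild (x : V) : V :=
  if f x = Fin.last m then r else if f x ≠ 0 ∧ x = a (f x) then a (f x + 1) else b (f x + 1)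

def distFromRoot (y : V) : ℕ := if y = r then 0 else (f y - 1).val + 1

def distToRoot (x : V) : ℕ := if x = r then 0 else (f x).rev.val + 1

variable {f a b r}

theorem level_blowupParent (ha : ∀ k, f (a k) = k) (hb : ∀ k, f (b k) = k) (hr : f r = 0)
    (y : V) : f (blowupParent f a b r y) = f y - 1 := by
  unfold blowupParent
  split_ifs with h1
  · rw [hr, h1, sub_self]
  · exact ha _
  · exact hb _

theorem level_blowupChild (ha : ∀ k, f (a k) = k) (hb : ∀ k, f (b k) = k) (hr : f r = 0)
    (x : V) : f (blowupChild f a b r x) = f x + 1 := by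
  unfold blowupChild
  split_ifs with h1
  · rw [hr, h1, Fin.last_add_one]
  · exact ha _
  · exact hb _

theorem blowupParent_eq_iff (ha : ∀ k, f (a k) = k) (hb : ∀ k, f (b k) = k) (hr : f r = 0)
    (y : V) : blowupParent f a b r y = r ↔ f y = 1 := by
  refine ⟨fun h => ?_, fun h => if_pos h⟩
  have := level_blowupParent ha hb hr y
  rw [h, hr, eq_comm, sub_eq_zero] at this
  exact this

theorem blowupChild_eq_iff (ha : ∀ k, f (a k) = k) (hb : ∀ k, f (b k) = k) (hr : f r = 0)
    (x : V) : blowupChild f a b r x = r ↔ f x = Fin.last m := by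
  refine ⟨fun h => ?_, fun h => if_pos h⟩
  have := level_blowupChild ha hb hr x
  rw [h, hr, ← Fin.last_add_one m] at this
  exact (add_right_cancel this).symm

theorem distFromRoot_blowupParent_lt (ha : ∀ k, f (a k) = k) (hb : ∀ k, f (b k) = k)
    (hr : f r = 0) {y : V} (hy : y ≠ r) :
    distFromRoot f r (blowupParent f a b r y) < distFromRoot f r y := by
  rw [distFromRoot, distFromRoot, if_neg hy]
  split_ifs with hp
  · omega
  · have hy1 : f y - 1 ≠ 0 := sub_ne_zero.mpr ((blowupParent_eq_iff ha hb hr y).not.mp hp)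
    have := Fin.sub_one_lt_iff.mpr (Fin.pos_iff_ne_zero.mpr hy1)
    rw [level_blowupParent ha hb hr]
    exact Nat.succ_lt_succ this

theorem distToRoot_blowupChild_lt (ha : ∀ k, f (a k) = k) (hb : ∀ k, f (b k) = k)
    (hr : f r = 0) {x : V} (hx : x ≠ r) :
    distToRoot f r (blowupChild f a b r x) < distToRoot f r x := by
  rw [distToRoot, distToRoot, if_neg hx]
  split_ifs with hc
  · omega
  · have hx1 : f x < Fin.last m :=
      Fin.lt_last_iff_ne_last.mpr ((blowupChild_eq_iff ha hb hr x).not.mp hc)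
    have := Fin.rev_lt_rev.mpr (Fin.lt_add_one_iff.mpr hx1)
    rw [level_blowupChild ha hb hr]
    exact Nat.succ_lt_succ this

theorem blowupChild_blowupParent_ne (ha : ∀ k, f (a k) = k) (hb : ∀ k, f (b k) = k)
    (hab : ∀ k, a k ≠ b k) (hr : f r = 0) {y : V} (hy : y ≠ r)
    (hp : blowupParent f a b r y ≠ r) : blowupChild f a b r (blowupParent f a b r y) ≠ y := by
  have hy1 : f y ≠ 1 := (blowupParent_eq_iff ha hb hr y).not.mp hp
  have hx : f (blowupParent f a b r y) = f y - 1 := level_blowupParent ha hb hr y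
  have hx0 : f y - 1 ≠ 0 := sub_ne_zero.mpr hy1
  rw [blowupChild, hx, sub_add_cancel]
  split_ifs with hlast hxa
  · exact hy.symm
  · rw [blowupParent, if_neg hy1] at hxa
    split_ifs at hxa with hyb
    · exact fun h => hab _ (h.trans hyb)
    · exact absurd hxa.2.symm (hab _)
  · exact fun h => hxa ⟨hx0, by rw [blowupParent, if_neg hy1, if_pos h.symm]⟩

theorem goodPair_of_cyclic_levels {A : V → V → Prop} (hA : ∀ x y, f y = f x + 1 → A x y)
    (ha : ∀ k, f (a k) = k) (hb : ∀ k, f (b k) = k) (hab : ∀ k, a k ≠ b k) (hr : f r = 0) :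
    GoodPair A r :=
  goodPair_of_parent_child (blowupParent f a b r) (blowupChild f a b r)
    (distFromRoot f r) (distToRoot f r)
    (fun y _ => hA _ _ (by rw [level_blowupParent ha hb hr, sub_add_cancel]))
    (fun _ hy => distFromRoot_blowupParent_lt ha hb hr hy)
    (fun x _ => hA _ _ (level_blowupChild ha hb hr x))
    (fun _ hx => distToRoot_blowupChild_lt ha hb hr hx)
    (fun _ hy hp => blowupChild_blowupParent_ne ha hb hab hr hy hp)

end CyclicLevels

theorem HasHamCycle.exists_cyclic_equiv {α : Type*} [Nonempty α] {T : α → α → Prop}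
    (h : HasHamCycle T) : ∃ m, ∃ e : Fin (m + 1) ≃ α, ∀ k, T (e k) (e (k + 1)) := by
  classical
  obtain ⟨l, hnd, hmem, hch, hwrap⟩ := h
  cases l with
  | nil => exact absurd (hmem (Classical.arbitrary α)) List.not_mem_nil
  | cons x l =>
    refine ⟨l.length, hnd.getEquivOfForallMemList _ hmem, fun k => ?_⟩
    rw [List.Nodup.getEquivOfForallMemList_apply, List.Nodup.getEquivOfForallMemList_apply]
    rcases (Fin.le_last k).eq_or_lt with rfl | hk
    · rw [Fin.last_add_one]
      exact hwrap _ _ rfl (by simp [List.getLast?_eq_getElem?])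
    · have := List.isChain_iff_getElem.mp hch k (by simpa using Fin.lt_def.mp hk)
      simpa [Fin.val_add_one_of_lt hk] using this

/-- If `T` (on `t ≥ 2` vertices) has a Hamiltonian cycle and each `H i` has at
least two vertices, then the composition `T[H_1,…,H_t]` has a good pair rooted
at every vertex. -/
theorem stmt4 {t : ℕ} (ht : 2 ≤ t) (T : Fin t → Fin t → Prop)
    (n : Fin t → ℕ) (hn : ∀ i, 2 ≤ n i)
    (H : ∀ i : Fin t, Fin (n i) → Fin (n i) → Prop)
    (hham : HasHamCycle T) (r : (i : Fin t) × Fin (n i)) :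
    GoodPair (CompArc T n H) r := by
  have : Nonempty (Fin t) := ⟨r.1⟩
  obtain ⟨m, e, he⟩ := hham.exists_cyclic_equiv
  have h10 : (1 : Fin (m + 1)) ≠ 0 := fun h => by
    have := Fintype.card_congr e
    rw [Fin.one_eq_zero_iff] at h
    simp only [Fintype.card_fin] at this
    omega
  let g : Fin (m + 1) → Fin t := fun k => e (k + e.symm r.1)
  refine goodPair_of_cyclic_levels (f := fun x => e.symm x.1 - e.symm r.1)
    (a := fun k => ⟨g k, ⟨1, hn _⟩⟩) (b := fun k => ⟨g k, ⟨0, zero_lt_two.trans_le (hn _)⟩⟩)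
    (fun x y hxy => ?_) (fun k => ?_) (fun k => ?_) (fun k h => ?_) (sub_self _)
  · rw [sub_add_eq_add_sub, sub_left_inj] at hxy
    refine Or.inr ⟨fun h => h10 ?_, ?_⟩
    · rw [h] at hxy
      exact left_eq_add.mp hxy
    · simpa [← hxy] using he (e.symm x.1)
  · simp [g]
  · simp [g]
  · simp at h
end

section
/- Let T be a strongly connected digraph with t ≥ 2 vertices and let H_1, ..., H_t be arbitrary digraphs each having at least two vertices. Then the composition Q = T[H_1, ..., H_t] is strong and has a good pair rooted at every vertex of Q. -/
variable {V : Type*}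

/-!
Only the arcs of `T` between distinct blocks are needed. Take an out-tree and an in-tree of `T`
rooted at the block of `r` and lift them to the composition: a vertex outside the root block is
joined to a vertex of its parent (successor) block, and the vertices of the root block other
than `r` are joined to a fixed in-neighbour (out-neighbour) block. Colour a vertex by whether it
is the vertex `0` of its block; choosing the lifts so that out-tree arcs keep the colour while
in-tree arcs flip it makes the two branchings arc-disjoint. Strong connectivity follows, since
every vertex reaches `r` and is reached from it.
-/

open Relation

def ReachIn (A : V → V → Prop) : ℕ → V → V → Prop
  | 0 => Eq
  | n + 1 => fun a c => ∃ b, ReachIn A n a b ∧ A b c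

theorem Relation.ReflTransGen.exists_reachIn {A : V → V → Prop} {a b : V}
    (h : ReflTransGen A a b) : ∃ n, ReachIn A n a b := by
  induction h with
  | refl => exact ⟨0, rfl⟩
  | tail _ hbc ih =>
    obtain ⟨n, hn⟩ := ih
    exact ⟨n + 1, _, hn, hbc⟩

/-- The rank is the distance from `s`, the parent the penultimate vertex of a shortest walk. -/
theorem exists_parent_of_reachable {A : V → V → Prop} {s : V} (h : ∀ v, ReflTransGen A s v) :
    ∃ (par : V → V) (rank : V → ℕ), ∀ v, v ≠ s → A (par v) v ∧ rank (par v) < rank v := by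
  classical
  have hreach (v : V) : ∃ n, ReachIn A n s v := (h v).exists_reachIn
  have hpar (v : V) (hv : v ≠ s) : ∃ u, A u v ∧ Nat.find (hreach u) < Nat.find (hreach v) := by
    obtain ⟨m, hm⟩ : ∃ m, Nat.find (hreach v) = m + 1 := by
      refine Nat.exists_eq_succ_of_ne_zero fun h0 => hv ?_
      have h := Nat.find_spec (hreach v)
      rw [h0] at h
      exact h.symm
    obtain ⟨u, hsu, huv⟩ : ReachIn A (m + 1) s v := hm ▸ Nat.find_spec (hreach v)
    exact ⟨u, huv, hm ▸ Nat.lt_succ_of_le (Nat.find_min' _ hsu)⟩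
  choose! par hpar using hpar
  exact ⟨par, fun v => Nat.find (hreach v), hpar⟩

theorem exists_ne_rel_of_reflTransGen {A : V → V → Prop} {a b : V} (h : ReflTransGen A a b)
    (hab : a ≠ b) : ∃ c, c ≠ b ∧ A c b := by
  induction h with
  | refl => exact absurd rfl hab
  | @tail c d _ hcd ih =>
    by_cases hc : c = d
    · subst hc; exact ih hab
    · exact ⟨c, hc, hcd⟩

theorem isOutBranching_of_parent_s6 {A : V → V → Prop} {r : V} (par : V → V) (rank : V → ℕ)
    (harc : ∀ v, v ≠ r → A (par v) v) (hrank : ∀ v, v ≠ r → rank (par v) < rank v) :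
    IsOutBranching A (fun u v => v ≠ r ∧ u = par v) r := by
  refine ⟨fun u v huv => huv.2 ▸ harc v huv.1, fun v => ?_, fun v hv => ?_, fun u h => h.1 rfl⟩
  · induction h : rank v using Nat.strong_induction_on generalizing v with
    | _ k ih =>
      by_cases hv : v = r
      · exact hv ▸ ReflTransGen.refl
      · exact (ih _ (h ▸ hrank v hv) (par v) rfl).tail ⟨hv, rfl⟩
  · simp [hv]

theorem IsOutBranching.flip {A B : V → V → Prop} {r : V}
    (h : IsOutBranching (flip A) (flip B) r) : IsInBranching A B r := by
  obtain ⟨hsub, hreach, hdeg, hroot⟩ := h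
  exact ⟨fun x y hxy => hsub y x hxy, fun v => reflTransGen_swap.mp (hreach v), hdeg, hroot⟩

theorem GoodPair.strong {A : V → V → Prop} {r : V} (h : GoodPair A r) : Strong A := by
  obtain ⟨Bp, Bm, ⟨hpA, hpreach, -⟩, ⟨hmA, hmreach, -⟩, -⟩ := h
  exact fun x y =>
    (ReflTransGen.mono hmA _ _ (hmreach x)).trans (ReflTransGen.mono hpA _ _ (hpreach y))

section Blowup

variable {ι : Type*} [DecidableEq ι] {X : ι → Type*}

def liftParent (r : Σ i, X i) (π : ι → ι) (q : ι) (f : ∀ i j, X i → X j)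
    (v : Σ i, X i) : Σ i, X i :=
  if v.1 = r.1 then ⟨q, f v.1 q v.2⟩
  else if π v.1 = r.1 then r
  else ⟨π v.1, f v.1 (π v.1) v.2⟩

variable {T : ι → ι → Prop} {A : (Σ i, X i) → (Σ i, X i) → Prop}

theorem isOutBranching_liftParent (hA : ∀ x y, x.1 ≠ y.1 → T x.1 y.1 → A x y)
    {r : Σ i, X i} {π : ι → ι} {d : ι → ℕ} (hπ : ∀ i, i ≠ r.1 → T (π i) i ∧ d (π i) < d i)
    {q : ι} (hq : q ≠ r.1) (hTq : T q r.1) (f : ∀ i j, X i → X j) :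
    IsOutBranching A (fun u v => v ≠ r ∧ u = liftParent r π q f v) r := by
  classical
  refine isOutBranching_of_parent_s6 _
    (fun v => if v.1 = r.1 then (if v = r then 0 else d q + 2) else d v.1 + 1) ?_ ?_
  · intro v hv
    unfold liftParent
    split_ifs with h1 h2
    · exact hA _ _ (show q ≠ v.1 from h1 ▸ hq) (show T q v.1 from h1 ▸ hTq)
    · exact hA _ _ (Ne.symm h1) (h2 ▸ (hπ _ h1).1)
    · exact hA _ _ (ne_of_apply_ne d (hπ _ h1).2.ne) (hπ _ h1).1
  · intro v hv
    by_cases h1 : v.1 = r.1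
    · simp [liftParent, h1, hq, hv]
    · obtain ⟨-, hd⟩ := hπ _ h1
      by_cases h2 : π v.1 = r.1
      · simp [liftParent, h1, h2]
      · simp [liftParent, h1, h2, hd]

theorem liftParent_of_fst_ne {r v : Σ i, X i} (π : ι → ι) (q : ι) (f : ∀ i j, X i → X j)
    (hv : v.1 ≠ r.1) :
    liftParent r π q f v = r ∨
      π v.1 ≠ r.1 ∧ liftParent r π q f v = ⟨π v.1, f v.1 (π v.1) v.2⟩ := by
  unfold liftParent
  by_cases h : π v.1 = r.1 <;> simp [hv, h]

theorem liftParent_fst_ne {r v : Σ i, X i} (π : ι → ι) {q : ι} (hq : q ≠ r.1)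
    (f : ∀ i j, X i → X j) (hv : liftParent r π q f v ≠ r) : (liftParent r π q f v).1 ≠ r.1 := by
  by_cases h : v.1 = r.1
  · simpa [liftParent, h] using hq
  · rcases liftParent_of_fst_ne π q f h with h' | ⟨hπ, h'⟩
    · exact absurd h' hv
    · rwa [h']

/-- Arcs of the out-branching keep the colour `col` and arcs of the in-branching flip it. -/
theorem liftParent_disjoint (col : (Σ i, X i) → Bool) {f g : ∀ i j, X i → X j}
    (hf : ∀ (v : Σ i, X i) j, col ⟨j, f v.1 j v.2⟩ = col v)
    (hg : ∀ (v : Σ i, X i) j, col ⟨j, g v.1 j v.2⟩ = !col v)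
    {r : Σ i, X i} {π σ : ι → ι} {p q : ι} (hq : q ≠ r.1) (u v : Σ i, X i) :
    ¬ ((v ≠ r ∧ u = liftParent r π q f v) ∧ (u ≠ r ∧ v = liftParent r σ p g u)) := by
  rintro ⟨⟨hv, hvu⟩, hu, huv⟩
  have hu1 : u.1 ≠ r.1 := hvu ▸ liftParent_fst_ne π hq f (hvu ▸ hu)
  rcases liftParent_of_fst_ne σ p g hu1 with h | ⟨hσ, h⟩
  · exact hv (huv.trans h)
  · have hv1 : v.1 ≠ r.1 := by rw [huv, h]; exact hσ
    rcases liftParent_of_fst_ne π q f hv1 with h' | ⟨-, h'⟩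
    · exact hu (hvu.trans h')
    · refine Bool.not_ne_self (col v) (Eq.symm ?_)
      calc col v = col ⟨σ u.1, g u.1 (σ u.1) u.2⟩ := by rw [← h, ← huv]
        _ = !col u := hg u _
        _ = !col v := by rw [hvu, h', hf]

theorem goodPair_of_blowup [Nontrivial ι] (hT : Strong T)
    (hA : ∀ x y, x.1 ≠ y.1 → T x.1 y.1 → A x y)
    (col : (Σ i, X i) → Bool) {f g : ∀ i j, X i → X j}
    (hf : ∀ (v : Σ i, X i) j, col ⟨j, f v.1 j v.2⟩ = col v)
    (hg : ∀ (v : Σ i, X i) j, col ⟨j, g v.1 j v.2⟩ = !col v) (r : Σ i, X i) :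
    GoodPair A r := by
  obtain ⟨j, hj⟩ := exists_ne r.1
  obtain ⟨π, d, hπ⟩ := exists_parent_of_reachable (hT r.1)
  obtain ⟨σ, e, hσ⟩ :=
    exists_parent_of_reachable (A := flip T) fun i => reflTransGen_swap.mpr (hT i r.1)
  obtain ⟨q, hq, hTq⟩ := exists_ne_rel_of_reflTransGen (hT j r.1) hj
  obtain ⟨p, hp, hTp⟩ := exists_ne_rel_of_reflTransGen (reflTransGen_swap.mpr (hT r.1 j)) hj
  have hA' : ∀ x y : Σ i, X i, x.1 ≠ y.1 → flip T x.1 y.1 → flip A x y :=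
    fun x y hxy h => hA y x (Ne.symm hxy) h
  exact ⟨_, _, isOutBranching_liftParent hA hπ hq hTq f,
    (isOutBranching_liftParent hA' hσ hp hTp g).flip, liftParent_disjoint col hf hg hq⟩

end Blowup

/-- If `T` is strong on `t ≥ 2` vertices and each `H i` has at least two
vertices, then the composition `T[H_1,…,H_t]` is strong and has a good pair
rooted at every vertex. -/
theorem stmt6 {t : ℕ} (ht : 2 ≤ t) (T : Fin t → Fin t → Prop)
    (hT : Strong T) (n : Fin t → ℕ) (hn : ∀ i, 2 ≤ n i)
    (H : ∀ i : Fin t, Fin (n i) → Fin (n i) → Prop) :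
    Strong (CompArc T n H) ∧
    ∀ r : (i : Fin t) × Fin (n i), GoodPair (CompArc T n H) r := by
  have : Nontrivial (Fin t) := Fin.nontrivial_iff_two_le.mpr ht
  have hgood : ∀ r, GoodPair (CompArc T n H) r :=
    goodPair_of_blowup hT (fun x y hxy h => Or.inr ⟨hxy, h⟩) (fun v => decide (v.2.val = 0))
      (f := fun _ j x => ⟨min x 1, by have := hn j; omega⟩)
      (g := fun _ j x => ⟨1 - x, by have := hn j; omega⟩)
      (fun v j => by simp) (fun v j => by simp only [← decide_not, decide_eq_decide]; omega)
  exact ⟨(hgood ⟨⟨0, by omega⟩, ⟨0, by have := hn ⟨0, by omega⟩; omega⟩⟩).strong, hgood⟩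
end

section
/- If a strong digraph D is a composition T[H_1,...,H_t] with T strong, t ≥ 2 and every n_i ≥ 2, then for every vertex r of D there exist spanning subgraphs B⁺ and B⁻ of D with A(B⁺) ∩ A(B⁻) = ∅ such that B⁺ is an out-branching rooted at r and B⁻ is an in-branching rooted at r; in particular B⁺ ∪ B⁻ is a strong spanning subgraph of D with at most 2|V(D)| − 2 arcs. -/
variable {V : Type*}

private def Ch {t : ℕ} (T : Fin t → Fin t → Prop) (i0 : Fin t) : ℕ → Fin t → Prop
  | 0, l => l = i0
  | nn+1, l => ∃ p, Ch T i0 nn p ∧ T p l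

private lemma ch_of_rtg {t : ℕ} {T : Fin t → Fin t → Prop} {i0 l : Fin t}
    (h : Relation.ReflTransGen T i0 l) : ∃ nn, Ch T i0 nn l := by
  induction h with
  | refl => exact ⟨0, rfl⟩
  | tail _ hT ih => obtain ⟨nn, hc⟩ := ih; exact ⟨nn+1, _, hc, by assumption⟩

private lemma exists_parent {t : ℕ} {T : Fin t → Fin t → Prop} (i0 : Fin t)
    (h : ∀ l, Relation.ReflTransGen T i0 l) :
    ∃ (π : Fin t → Fin t) (D : Fin t → ℕ),
      ∀ l, l ≠ i0 → T (π l) l ∧ D (π l) < D l ∧ 0 < D l := by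
  classical
  have hex : ∀ l, ∃ nn, Ch T i0 nn l := fun l => ch_of_rtg (h l)
  set D := fun l => Nat.find (hex l) with hD
  have key : ∀ l, l ≠ i0 → ∃ p, T p l ∧ D p < D l ∧ 0 < D l := by
    intro l hl
    have hspec := Nat.find_spec (hex l)
    have hpos : 0 < D l := by
      rcases Nat.eq_zero_or_pos (D l) with h0 | h0
      · exfalso
        have h0' : Nat.find (hex l) = 0 := h0
        have : Ch T i0 0 l := by rwa [h0'] at hspec
        exact hl this
      · exact h0
    obtain ⟨d, hd⟩ := Nat.exists_eq_succ_of_ne_zero hpos.ne'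
    have hd' : Nat.find (hex l) = d + 1 := hd
    have hch : Ch T i0 (d+1) l := by rwa [hd'] at hspec
    obtain ⟨p, hp, hTp⟩ := hch
    refine ⟨p, hTp, ?_, hpos⟩
    have : D p ≤ d := Nat.find_min' (hex p) hp
    omega
  refine ⟨fun l => if hl : l = i0 then i0 else Classical.choose (key l hl), D, fun l hl => ?_⟩
  simp only [dif_neg hl]
  exact Classical.choose_spec (key l hl)

private lemma exists_into {t : ℕ} {T : Fin t → Fin t → Prop} {i0 j : Fin t}
    (h : Relation.ReflTransGen T j i0) : j ≠ i0 → ∃ k, k ≠ i0 ∧ T k i0 := by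
  classical
  induction h using Relation.ReflTransGen.head_induction_on with
  | refl => exact fun hj => absurd rfl hj
  | @head a c h' h'' ih =>
    intro hj
    by_cases hc : c = i0
    · exact ⟨a, hj, hc ▸ h'⟩
    · exact ih hc

private lemma rtg_flip {α : Type*} {T : α → α → Prop} {a b : α}
    (h : Relation.ReflTransGen T a b) : Relation.ReflTransGen (flip T) b a := by
  induction h with
  | refl => exact .refl
  | tail _ hT ih => exact Relation.ReflTransGen.head hT ih

open scoped Classical in
private noncomputable def par {t : ℕ} {n : Fin t → ℕ} (r : (i : Fin t) × Fin (n i))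
    (P : Fin t → Fin t) (A B : Fin t → (i : Fin t) × Fin (n i))
    (v : (i : Fin t) × Fin (n i)) : (i : Fin t) × Fin (n i) :=
  if P v.1 = r.1 then r else (if v = A v.1 then B (P v.1) else A (P v.1))

open scoped Classical in
private noncomputable def suc {t : ℕ} {n : Fin t → ℕ} (r : (i : Fin t) × Fin (n i))
    (S : Fin t → Fin t) (A B : Fin t → (i : Fin t) × Fin (n i))
    (u : (i : Fin t) × Fin (n i)) : (i : Fin t) × Fin (n i) :=
  if S u.1 = r.1 then r else (if u = B u.1 then B (S u.1) else A (S u.1))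

/-- If `T` is strong, `t ≥ 2` and each `n i ≥ 2`, then for every vertex `r` of
the composition there are arc-disjoint out- and in-branchings rooted at `r`,
whose union is a strong spanning subdigraph with at most `2|V| − 2` arcs. -/
theorem stmt7 {t : ℕ} (ht : 2 ≤ t) (T : Fin t → Fin t → Prop)
    (hT : Strong T) (n : Fin t → ℕ) (hn : ∀ i, 2 ≤ n i)
    (H : ∀ i : Fin t, Fin (n i) → Fin (n i) → Prop)
    (r : (i : Fin t) × Fin (n i)) :
    ∃ Bp Bm : ((i : Fin t) × Fin (n i)) → ((i : Fin t) × Fin (n i)) → Prop,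
      IsOutBranching (CompArc T n H) Bp r ∧
      IsInBranching (CompArc T n H) Bm r ∧
      (∀ x y, ¬ (Bp x y ∧ Bm x y)) ∧
      Strong (fun x y => Bp x y ∨ Bm x y) ∧
      Nat.card {p : ((i : Fin t) × Fin (n i)) × ((i : Fin t) × Fin (n i)) //
          Bp p.1 p.2 ∨ Bm p.1 p.2} ≤
        2 * Nat.card ((i : Fin t) × Fin (n i)) - 2 := by
  classical
  obtain ⟨π, D, hπ⟩ := exists_parent r.1 (fun l => hT r.1 l)
  obtain ⟨σ, D', hσ⟩ := exists_parent (T := flip T) r.1 (fun l => rtg_flip (hT l r.1))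
  have hnt : Nontrivial (Fin t) := Fin.nontrivial_iff_two_le.mpr ht
  obtain ⟨j, hj⟩ := exists_ne r.1
  obtain ⟨k, hk, hTk⟩ := exists_into (hT j r.1) hj
  obtain ⟨m, hm, hTm⟩ := exists_into (T := flip T) (rtg_flip (hT r.1 j)) hj
  set P : Fin t → Fin t := fun l => if l = r.1 then k else π l with hP
  set S : Fin t → Fin t := fun i => if i = r.1 then m else σ i with hS
  set A : Fin t → (i : Fin t) × Fin (n i) :=
    fun i => if i = r.1 then r else ⟨i, ⟨0, by have := hn i; omega⟩⟩ with hA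
  have hA1 : ∀ i, (A i).1 = i := by
    intro i
    rw [hA]; dsimp only
    by_cases h : i = r.1
    · rw [if_pos h]; exact h.symm
    · rw [if_neg h]
  have hBex : ∀ i, ∃ v : (i : Fin t) × Fin (n i), v.1 = i ∧ v ≠ A i := by
    intro i
    have h2 := hn i
    by_cases h : (⟨i, ⟨0, by omega⟩⟩ : (i : Fin t) × Fin (n i)) = A i
    · refine ⟨⟨i, ⟨1, by omega⟩⟩, rfl, fun hcon => ?_⟩
      rw [← h] at hcon
      have := congrArg (fun v : (i : Fin t) × Fin (n i) => (v.2 : ℕ)) hcon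
      simp at this
    · exact ⟨_, rfl, h⟩
  choose B hB1 hBA using hBex
  set par' := par r P A B with hpar
  set suc' := suc r S A B with hsuc
  set Bp : ((i : Fin t) × Fin (n i)) → ((i : Fin t) × Fin (n i)) → Prop :=
    fun u v => v ≠ r ∧ u = par' v with hBp
  set Bm : ((i : Fin t) × Fin (n i)) → ((i : Fin t) × Fin (n i)) → Prop :=
    fun u v => u ≠ r ∧ v = suc' u with hBm
  have hPne : ∀ l, P l ≠ l ∧ T (P l) l := by
    intro l
    rw [hP]; dsimp only
    by_cases h : l = r.1
    · rw [if_pos h]; exact ⟨h ▸ hk, h ▸ hTk⟩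
    · rw [if_neg h]
      have := hπ l h
      exact ⟨fun e => absurd (e ▸ this.2.1) (lt_irrefl _), this.1⟩
  have hSne : ∀ l, S l ≠ l ∧ T l (S l) := by
    intro l
    rw [hS]; dsimp only
    by_cases h : l = r.1
    · rw [if_pos h]; exact ⟨h ▸ hm, h ▸ hTm⟩
    · rw [if_neg h]
      have := hσ l h
      exact ⟨fun e => absurd (e ▸ this.2.1) (lt_irrefl _), this.1⟩
  have hpar_eq : ∀ v, P v.1 = r.1 → par' v = r := by
    intro v h; rw [hpar]; unfold par; rw [if_pos h]
  have hpar_eq2 : ∀ v, P v.1 ≠ r.1 →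
      par' v = if v = A v.1 then B (P v.1) else A (P v.1) := by
    intro v h; rw [hpar]; unfold par; rw [if_neg h]
  have hsuc_eq : ∀ u, S u.1 = r.1 → suc' u = r := by
    intro u h; rw [hsuc]; unfold suc; rw [if_pos h]
  have hsuc_eq2 : ∀ u, S u.1 ≠ r.1 →
      suc' u = if u = B u.1 then B (S u.1) else A (S u.1) := by
    intro u h; rw [hsuc]; unfold suc; rw [if_neg h]
  have hpar1 : ∀ v, P v.1 ≠ r.1 → (par' v).1 = P v.1 ∧ par' v ≠ r := by
    intro v h
    rw [hpar_eq2 v h]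
    constructor
    · split
      · exact hB1 _
      · exact hA1 _
    · split
      · intro e
        have := congrArg Sigma.fst e
        rw [hB1] at this
        exact h this
      · intro e
        have := congrArg Sigma.fst e
        rw [hA1] at this
        exact h this
  have hsuc1 : ∀ u, S u.1 ≠ r.1 → (suc' u).1 = S u.1 ∧ suc' u ≠ r := by
    intro u h
    rw [hsuc_eq2 u h]
    constructor
    · split
      · exact hB1 _
      · exact hA1 _
    · split
      · intro e
        have := congrArg Sigma.fst e
        rw [hB1] at this
        exact h this
      · intro e
        have := congrArg Sigma.fst e
        rw [hA1] at this
        exact h this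
  have hParc : ∀ v, CompArc T n H (par' v) v := by
    intro v
    by_cases h : P v.1 = r.1
    · rw [hpar_eq v h]
      exact Or.inr ⟨h ▸ (hPne v.1).1, h ▸ (hPne v.1).2⟩
    · obtain ⟨h1, _⟩ := hpar1 v h
      exact Or.inr ⟨h1 ▸ (hPne v.1).1, h1 ▸ (hPne v.1).2⟩
  have hSarc : ∀ u, CompArc T n H u (suc' u) := by
    intro u
    by_cases h : S u.1 = r.1
    · rw [hsuc_eq u h]
      exact Or.inr ⟨(h ▸ (hSne u.1).1 : r.1 ≠ u.1).symm, h ▸ (hSne u.1).2⟩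
    · obtain ⟨h1, _⟩ := hsuc1 u h
      exact Or.inr ⟨(h1 ▸ (hSne u.1).1 : (suc' u).1 ≠ u.1).symm, h1 ▸ (hSne u.1).2⟩
  -- measures
  set M : ((i : Fin t) × Fin (n i)) → ℕ :=
    fun v => if v = r then 0 else if v.1 = r.1 then D k + 1 else D v.1 with hM
  set M' : ((i : Fin t) × Fin (n i)) → ℕ :=
    fun v => if v = r then 0 else if v.1 = r.1 then D' m + 1 else D' v.1 with hM'
  have hMval : ∀ x : (i : Fin t) × Fin (n i), x.1 ≠ r.1 → M x = D x.1 := by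
    intro x h2
    have h1 : x ≠ r := fun e => h2 (by rw [e])
    rw [hM]; dsimp only; rw [if_neg h1, if_neg h2]
  have hM'val : ∀ x : (i : Fin t) × Fin (n i), x.1 ≠ r.1 → M' x = D' x.1 := by
    intro x h2
    have h1 : x ≠ r := fun e => h2 (by rw [e])
    rw [hM']; dsimp only; rw [if_neg h1, if_neg h2]
  have hMstep : ∀ v, v ≠ r → M (par' v) < M v := by
    intro v hv
    by_cases hv1 : v.1 = r.1
    · have hPv : P v.1 = k := by rw [hP]; dsimp only; rw [if_pos hv1]
      have hknr : P v.1 ≠ r.1 := by rw [hPv]; exact hk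
      obtain ⟨h1, h2⟩ := hpar1 v hknr
      have e1 : M (par' v) = D k := by rw [hMval _ (by rw [h1]; exact hknr), h1, hPv]
      have e2 : M v = D k + 1 := by rw [hM]; dsimp only; rw [if_neg hv, if_pos hv1]
      omega
    · have hPv : P v.1 = π v.1 := by rw [hP]; dsimp only; rw [if_neg hv1]
      have hD := hπ v.1 hv1
      have e2 : M v = D v.1 := hMval v hv1
      by_cases hpi : P v.1 = r.1
      · have e1 : M (par' v) = 0 := by rw [hpar_eq v hpi, hM]; dsimp only; rw [if_pos rfl]
        rw [e1, e2]; exact hD.2.2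
      · obtain ⟨h1, h2⟩ := hpar1 v hpi
        have e1 : M (par' v) = D (π v.1) := by
          rw [hMval _ (by rw [h1]; exact hpi), h1, hPv]
        rw [e1, e2, ← hPv]
        rw [hPv]; exact hD.2.1
  have hM'step : ∀ v, v ≠ r → M' (suc' v) < M' v := by
    intro v hv
    by_cases hv1 : v.1 = r.1
    · have hSv : S v.1 = m := by rw [hS]; dsimp only; rw [if_pos hv1]
      have hknr : S v.1 ≠ r.1 := by rw [hSv]; exact hm
      obtain ⟨h1, h2⟩ := hsuc1 v hknr
      have e1 : M' (suc' v) = D' m := by rw [hM'val _ (by rw [h1]; exact hknr), h1, hSv]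
      have e2 : M' v = D' m + 1 := by rw [hM']; dsimp only; rw [if_neg hv, if_pos hv1]
      omega
    · have hSv : S v.1 = σ v.1 := by rw [hS]; dsimp only; rw [if_neg hv1]
      have hD := hσ v.1 hv1
      have e2 : M' v = D' v.1 := hM'val v hv1
      by_cases hpi : S v.1 = r.1
      · have e1 : M' (suc' v) = 0 := by rw [hsuc_eq v hpi, hM']; dsimp only; rw [if_pos rfl]
        rw [e1, e2]; exact hD.2.2
      · obtain ⟨h1, h2⟩ := hsuc1 v hpi
        have e1 : M' (suc' v) = D' (σ v.1) := by
          rw [hM'val _ (by rw [h1]; exact hpi), h1, hSv]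
        rw [e1, e2]; exact hD.2.1
  -- reachability
  have hBpR : ∀ v, Relation.ReflTransGen Bp r v := by
    have main : ∀ N v, M v ≤ N → Relation.ReflTransGen Bp r v := by
      intro N
      induction N with
      | zero =>
        intro v hv
        by_cases h : v = r
        · subst h; exact .refl
        · exact absurd (Nat.lt_of_lt_of_le (hMstep v h) hv) (Nat.not_lt_zero _)
      | succ N ih =>
        intro v hv
        by_cases h : v = r
        · subst h; exact .refl
        · have h1 := hMstep v h
          have h2 : M (par' v) ≤ N := by omega
          refine (ih (par' v) h2).tail ?_
          rw [hBp]
          exact ⟨h, rfl⟩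
    exact fun v => main (M v) v le_rfl
  have hBmR : ∀ v, Relation.ReflTransGen Bm v r := by
    have main : ∀ N v, M' v ≤ N → Relation.ReflTransGen Bm v r := by
      intro N
      induction N with
      | zero =>
        intro v hv
        by_cases h : v = r
        · subst h; exact .refl
        · exact absurd (Nat.lt_of_lt_of_le (hM'step v h) hv) (Nat.not_lt_zero _)
      | succ N ih =>
        intro v hv
        by_cases h : v = r
        · subst h; exact .refl
        · have h1 := hM'step v h
          have h2 : M' (suc' v) ≤ N := by omega
          refine Relation.ReflTransGen.head ?_ (ih (suc' v) h2)
          rw [hBm]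
          exact ⟨h, rfl⟩
    exact fun v => main (M' v) v le_rfl
  -- degrees
  have hBpdeg : ∀ v, v ≠ r → Nat.card {u // Bp u v} = 1 := by
    intro v hv
    rw [Nat.card_eq_one_iff_unique]
    constructor
    · constructor
      rintro ⟨x, hx⟩ ⟨y, hy⟩
      rw [hBp] at hx hy
      exact Subtype.ext (hx.2.trans hy.2.symm)
    · refine ⟨⟨par' v, ?_⟩⟩
      rw [hBp]
      exact ⟨hv, rfl⟩
  have hBmdeg : ∀ v, v ≠ r → Nat.card {u // Bm v u} = 1 := by
    intro v hv
    rw [Nat.card_eq_one_iff_unique]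
    constructor
    · constructor
      rintro ⟨x, hx⟩ ⟨y, hy⟩
      rw [hBm] at hx hy
      exact Subtype.ext (hx.2.trans hy.2.symm)
    · refine ⟨⟨suc' v, ?_⟩⟩
      rw [hBm]
      exact ⟨hv, rfl⟩
  -- disjointness
  have hdisj : ∀ x y, ¬ (Bp x y ∧ Bm x y) := by
    rintro x y ⟨hp, hm'⟩
    rw [hBp] at hp
    rw [hBm] at hm'
    obtain ⟨hyr, hx⟩ := hp
    obtain ⟨hxr, hy⟩ := hm'
    have hPy : P y.1 ≠ r.1 := fun h => hxr (by rw [hx, hpar_eq y h])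
    have hSx : S x.1 ≠ r.1 := fun h => hyr (by rw [hy, hsuc_eq x h])
    have hx' : x = if y = A y.1 then B (P y.1) else A (P y.1) := by
      rw [hx, hpar_eq2 y hPy]
    have hy' : y = if x = B x.1 then B (S x.1) else A (S x.1) := by
      rw [hy, hsuc_eq2 x hSx]
    by_cases hya : y = A y.1
    · rw [if_pos hya] at hx'
      have hx1 : x.1 = P y.1 := by rw [hx']; exact hB1 _
      have hxB : x = B x.1 := by rw [hx1]; exact hx'
      rw [if_pos hxB] at hy'
      have hy1 : y.1 = S x.1 := by rw [hy']; exact hB1 _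
      have hyB : y = B y.1 := by rw [hy1]; exact hy'
      exact hBA y.1 (hyB.symm.trans hya)
    · rw [if_neg hya] at hx'
      have hx1 : x.1 = P y.1 := by rw [hx']; exact hA1 _
      have hxA : x = A x.1 := by rw [hx1]; exact hx'
      have hxB : ¬ x = B x.1 := fun e => hBA x.1 (e.symm.trans hxA)
      rw [if_neg hxB] at hy'
      have hy1 : y.1 = S x.1 := by rw [hy']; exact hA1 _
      exact hya (by rw [hy1]; exact hy')
  -- strongness of the union
  have hstrong : Strong (fun x y => Bp x y ∨ Bm x y) := by
    intro x y
    have h1 : Relation.ReflTransGen (fun a b => Bp a b ∨ Bm a b) x r :=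
      Relation.ReflTransGen.mono (fun a b h => Or.inr h) _ _ (hBmR x)
    exact h1.trans (Relation.ReflTransGen.mono (fun a b h => Or.inl h) _ _ (hBpR y))
  -- cardinality
  have hcount : Nat.card {p : ((i : Fin t) × Fin (n i)) × ((i : Fin t) × Fin (n i)) //
      Bp p.1 p.2 ∨ Bm p.1 p.2} ≤ 2 * Nat.card ((i : Fin t) × Fin (n i)) - 2 := by
    set f : {p : ((i : Fin t) × Fin (n i)) × ((i : Fin t) × Fin (n i)) //
        Bp p.1 p.2 ∨ Bm p.1 p.2} →
        {v : (i : Fin t) × Fin (n i) // v ≠ r} ⊕ {v : (i : Fin t) × Fin (n i) // v ≠ r} :=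
      fun p => if h : Bp p.1.1 p.1.2 then Sum.inl ⟨p.1.2, h.1⟩
        else Sum.inr ⟨p.1.1, (p.2.resolve_left h).1⟩ with hf
    have hfinj : Function.Injective f := by
      rintro ⟨⟨a, b⟩, hab⟩ ⟨⟨c, d⟩, hcd⟩ h
      rw [hf] at h
      dsimp only at h
      by_cases h1 : Bp a b <;> by_cases h2 : Bp c d
      · rw [dif_pos h1, dif_pos h2] at h
        simp only [Sum.inl.injEq, Subtype.mk.injEq] at h
        subst h
        have hac : a = c := h1.2.trans h2.2.symm
        subst hac
        rfl
      · rw [dif_pos h1, dif_neg h2] at h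
        exact absurd h (by simp)
      · rw [dif_neg h1, dif_pos h2] at h
        exact absurd h (by simp)
      · rw [dif_neg h1, dif_neg h2] at h
        simp only [Sum.inr.injEq, Subtype.mk.injEq] at h
        subst h
        have hbd : b = d := (hab.resolve_left h1).2.trans (hcd.resolve_left h2).2.symm
        subst hbd
        rfl
    have hle := Nat.card_le_card_of_injective f hfinj
    rw [Nat.card_sum] at hle
    have hcards : Nat.card {v : (i : Fin t) × Fin (n i) // v ≠ r} =
        Nat.card ((i : Fin t) × Fin (n i)) - 1 := by
      rw [Nat.card_eq_fintype_card, Nat.card_eq_fintype_card]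
      have : Fintype.card {v : (i : Fin t) × Fin (n i) // ¬ (v = r)} =
          Fintype.card ((i : Fin t) × Fin (n i)) - Fintype.card {v : (i : Fin t) × Fin (n i) // v = r} := 
        Fintype.card_subtype_compl _
      rw [Fintype.card_subtype_eq] at this
      exact this
    have hpos : 1 ≤ Nat.card ((i : Fin t) × Fin (n i)) := by
      have : Nonempty ((i : Fin t) × Fin (n i)) := ⟨r⟩
      exact Nat.card_pos
    rw [hcards] at hle
    omega
  refine ⟨Bp, Bm, ⟨?_, hBpR, hBpdeg, ?_⟩, ⟨?_, hBmR, hBmdeg, ?_⟩, hdisj, hstrong, hcount⟩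
  · intro x y h
    rw [hBp] at h
    rw [h.2]
    exact hParc y
  · intro u h
    rw [hBp] at h
    exact h.1 rfl
  · intro x y h
    rw [hBm] at h
    rw [h.2]
    exact hSarc x
  · intro u h
    rw [hBm] at h
    exact h.1 rfl
end

section
/- Let Q' be a digraph with a good pair (B'⁺, B'⁻) rooted at r, and let Q be obtained from Q' by adding a nonempty set A of new vertices such that there exist v with vr ∈ A(B'⁻) and v' with rv' ∈ A(B'⁺) such that vu and uv' are arcs of Q for every u ∈ A. Then Q has a good pair rooted at r. -/
variable {V : Type*}

/-- If the induced subdigraph on `W ∋ r` has a good pair `(Bp, Bm)` rooted at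
`r`, and the new vertices outside `W` all receive an arc from some `v` with
`v → r` in `Bm` and send an arc to some `v'` with `r → v'` in `Bp`, then the
whole digraph has a good pair rooted at `r`. -/
theorem stmt10 [Fintype V] (Q : V → V → Prop) (W : Set V) (r : V)
    (hr : r ∈ W) (hA : ∃ u, u ∉ W)
    (Bp Bm : {v : V // v ∈ W} → {v : V // v ∈ W} → Prop)
    (hBp : IsOutBranching (fun x y : {v : V // v ∈ W} => Q x.1 y.1) Bp ⟨r, hr⟩)
    (hBm : IsInBranching (fun x y : {v : V // v ∈ W} => Q x.1 y.1) Bm ⟨r, hr⟩)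
    (hdisj : ∀ x y, ¬ (Bp x y ∧ Bm x y))
    (v v' : {v : V // v ∈ W})
    (hv : Bm v ⟨r, hr⟩) (hv' : Bp ⟨r, hr⟩ v')
    (harc : ∀ u, u ∉ W → Q v.1 u ∧ Q u v'.1) :
    GoodPair Q r := by
  classical
  set Bp' : V → V → Prop :=
    fun x y => (∃ hx : x ∈ W, ∃ hy : y ∈ W, Bp ⟨x, hx⟩ ⟨y, hy⟩) ∨ (x = v.1 ∧ y ∉ W)
    with hBp'def
  set Bm' : V → V → Prop :=
    fun x y => (∃ hx : x ∈ W, ∃ hy : y ∈ W, Bm ⟨x, hx⟩ ⟨y, hy⟩) ∨ (x ∉ W ∧ y = v'.1)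
    with hBm'def
  obtain ⟨hBp1, hBp2, hBp3, hBp4⟩ := hBp
  obtain ⟨hBm1, hBm2, hBm3, hBm4⟩ := hBm
  -- lift of paths
  have liftp : ∀ a b : {x : V // x ∈ W}, Relation.ReflTransGen Bp a b →
      Relation.ReflTransGen Bp' a.1 b.1 := by
    intro a b h
    exact Relation.ReflTransGen.lift (p := Bp') Subtype.val
      (fun x y hxy => Or.inl ⟨x.2, y.2, hxy⟩) _ _ h
  have liftm : ∀ a b : {x : V // x ∈ W}, Relation.ReflTransGen Bm a b →
      Relation.ReflTransGen Bm' a.1 b.1 := by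
    intro a b h
    exact Relation.ReflTransGen.lift (p := Bm') Subtype.val
      (fun x y hxy => Or.inl ⟨x.2, y.2, hxy⟩) _ _ h
  refine ⟨Bp', Bm', ⟨?_, ?_, ?_, ?_⟩, ⟨?_, ?_, ?_, ?_⟩, ?_⟩
  · rintro x y (⟨hx, hy, h⟩ | ⟨rfl, hy⟩)
    · exact hBp1 _ _ h
    · exact (harc y hy).1
  · intro y
    by_cases hy : y ∈ W
    · exact liftp ⟨r, hr⟩ ⟨y, hy⟩ (hBp2 ⟨y, hy⟩)
    · exact Relation.ReflTransGen.tail (liftp ⟨r, hr⟩ v (hBp2 v)) (Or.inr ⟨rfl, hy⟩)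
  · intro y hy
    rw [Nat.card_eq_one_iff_unique]
    by_cases hyW : y ∈ W
    · have h1 := hBp3 ⟨y, hyW⟩ (by simpa [Subtype.ext_iff] using hy)
      rw [Nat.card_eq_one_iff_unique] at h1
      obtain ⟨⟨hsub⟩, ⟨u0⟩⟩ := h1
      constructor
      · constructor
        intro ⟨a, ha⟩ ⟨b, hb⟩
        rcases ha with ⟨hax, _, ha⟩ | ⟨_, hyn⟩
        · rcases hb with ⟨hbx, _, hb⟩ | ⟨_, hyn⟩
          · have := hsub ⟨⟨a, hax⟩, ha⟩ ⟨⟨b, hbx⟩, hb⟩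
            simpa [Subtype.ext_iff] using this
          · exact absurd hyW hyn
        · exact absurd hyW hyn
      · exact ⟨⟨u0.1.1, Or.inl ⟨u0.1.2, hyW, u0.2⟩⟩⟩
    · constructor
      · constructor
        intro ⟨a, ha⟩ ⟨b, hb⟩
        rcases ha with ⟨_, hyw, _⟩ | ⟨rfl, _⟩
        · exact absurd hyw hyW
        rcases hb with ⟨_, hyw, _⟩ | ⟨rfl, _⟩
        · exact absurd hyw hyW
        rfl
      · exact ⟨⟨v.1, Or.inr ⟨rfl, hyW⟩⟩⟩
  · rintro u (⟨hu, hrw, h⟩ | ⟨_, hrn⟩)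
    · exact hBp4 ⟨u, hu⟩ h
    · exact hrn hr
  · rintro x y (⟨hx, hy, h⟩ | ⟨hx, rfl⟩)
    · exact hBm1 _ _ h
    · exact (harc x hx).2
  · intro y
    by_cases hy : y ∈ W
    · exact liftm ⟨y, hy⟩ ⟨r, hr⟩ (hBm2 ⟨y, hy⟩)
    · exact Relation.ReflTransGen.head (Or.inr ⟨hy, rfl⟩) (liftm v' ⟨r, hr⟩ (hBm2 v'))
  · intro y hy
    rw [Nat.card_eq_one_iff_unique]
    by_cases hyW : y ∈ W
    · have h1 := hBm3 ⟨y, hyW⟩ (by simpa [Subtype.ext_iff] using hy)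
      rw [Nat.card_eq_one_iff_unique] at h1
      obtain ⟨⟨hsub⟩, ⟨u0⟩⟩ := h1
      constructor
      · constructor
        intro ⟨a, ha⟩ ⟨b, hb⟩
        rcases ha with ⟨_, hax, ha⟩ | ⟨hyn, _⟩
        · rcases hb with ⟨_, hbx, hb⟩ | ⟨hyn, _⟩
          · have := hsub ⟨⟨a, hax⟩, ha⟩ ⟨⟨b, hbx⟩, hb⟩
            simpa [Subtype.ext_iff] using this
          · exact absurd hyW hyn
        · exact absurd hyW hyn
      · exact ⟨⟨u0.1.1, Or.inl ⟨hyW, u0.1.2, u0.2⟩⟩⟩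
    · constructor
      · constructor
        intro ⟨a, ha⟩ ⟨b, hb⟩
        rcases ha with ⟨hyw, _, _⟩ | ⟨_, rfl⟩
        · exact absurd hyw hyW
        rcases hb with ⟨hyw, _, _⟩ | ⟨_, rfl⟩
        · exact absurd hyw hyW
        rfl
      · exact ⟨⟨v'.1, Or.inr ⟨hyW, rfl⟩⟩⟩
  · rintro u (⟨hrw, hu, h⟩ | ⟨hrn, _⟩)
    · exact hBm4 ⟨u, hu⟩ h
    · exact hrn hr
  · rintro x y ⟨hp, hm⟩
    rcases hp with ⟨hx, hy, hp⟩ | ⟨rfl, hy⟩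
    · rcases hm with ⟨_, _, hm⟩ | ⟨hxn, _⟩
      · exact hdisj _ _ ⟨hp, hm⟩
      · exact hxn hx
    · rcases hm with ⟨_, hyw, _⟩ | ⟨_, rfl⟩
      · exact hy hyw
      · exact hy v'.2
end

section
/- Let C be a directed cycle u_1 u_2 ... u_t u_1 with t ≥ 2, and let Q = C[K̄_2, ..., K̄_2] be the composition of C with t copies of the arcless two-vertex digraph K̄_2 (so Q has 2t vertices u_{i,j}, i ∈ [t], j ∈ {1,2}). Then Q has a good pair rooted at u_{1,1}. Explicitly, the out-branching may be taken as the path u_{1,1} u_{2,1} ... u_{t,1} u_{1,2} u_{2,2} ... u_{t,2}, and an arc-disjoint in-branching rooted at u_{1,1} exists using arcs {u_{i,2} u_{i+1,1} : 1 ≤ i ≤ t−1} ∪ {u_{i,1} u_{i+1,2} : 2 ≤ i ≤ t−1} ∪ {u_{t,1} u_{1,1}, u_{t,2} u_{1,1}}. -/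
variable {V : Type*}

/-- Arcs of the composition `C[K̄₂,…,K̄₂]` of a directed `t`-cycle with copies
of the arcless two-vertex digraph. -/
def CycComp (t : ℕ) [NeZero t] (x y : Fin t × Fin 2) : Prop := y.1 = x.1 + 1

/-- The explicit out-branching: the Hamiltonian path
`u_{1,1} u_{2,1} … u_{t,1} u_{1,2} u_{2,2} … u_{t,2}` (0-indexed here). -/
def BpEx (t : ℕ) [NeZero t] (x y : Fin t × Fin 2) : Prop :=
  (y.1 = x.1 + 1 ∧ x.1 + 1 ≠ 0 ∧ y.2 = x.2) ∨
  (x.1 + 1 = 0 ∧ x.2 = 0 ∧ y.1 = 0 ∧ y.2 = 1)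

/-- The explicit in-branching with arcs
`{u_{i,2}u_{i+1,1} : 1 ≤ i ≤ t−1} ∪ {u_{i,1}u_{i+1,2} : 2 ≤ i ≤ t−1} ∪
{u_{t,1}u_{1,1}, u_{t,2}u_{1,1}}` (0-indexed here). -/
def BmEx (t : ℕ) [NeZero t] (x y : Fin t × Fin 2) : Prop :=
  (x.2 = 1 ∧ y.2 = 0 ∧ y.1 = x.1 + 1 ∧ x.1 + 1 ≠ 0) ∨
  (x.2 = 0 ∧ y.2 = 1 ∧ x.1 ≠ 0 ∧ y.1 = x.1 + 1 ∧ x.1 + 1 ≠ 0) ∨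
  (x.1 + 1 = 0 ∧ y = (0, 0))

/-!
The out-branching is the Hamiltonian path `u_{1,1} … u_{t,1} u_{1,2} … u_{t,2}`. The
in-branching sends each vertex of parts `1, …, t-1` other than the root to the vertex of the
next part with the other second index, and both vertices of part `t` to the root. An arc set
that is the graph of a parent map on the non-root vertices, along which some potential
strictly decreases, is an in-branching; reversing arcs turns this into out-branchings, and
the path is the graph of its predecessor map. Disjointness: path arcs keep the second index
except the one leaving `u_{t,1}`, while in-branching arcs switch it except those leaving part `t`.
-/

theorem Fin.val_add_one_of_add_one_ne_zero {n : ℕ} [NeZero n] {i : Fin n} (h : i + 1 ≠ 0) :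
    (i + 1).val = i.val + 1 := by
  obtain ⟨m, rfl⟩ := Nat.exists_eq_succ_of_ne_zero (NeZero.ne n)
  rw [Fin.val_add_one, if_neg]
  rintro rfl
  exact h (Fin.last_add_one m)

theorem IsInBranching.swap {A B : V → V → Prop} {r : V}
    (h : IsInBranching (Function.swap A) (Function.swap B) r) : IsOutBranching A B r :=
  ⟨fun x y hxy => h.1 y x hxy, fun v => Relation.reflTransGen_swap.1 (h.2.1 v), h.2.2.1, h.2.2.2⟩

theorem isInBranching_of_parent {A B : V → V → Prop} {r : V} (p : V → V) (h : V → ℕ)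
    (hBA : ∀ x y, B x y → A x y) (hB : ∀ v u, B v u ↔ v ≠ r ∧ u = p v)
    (hp : ∀ v, v ≠ r → h (p v) < h v) : IsInBranching A B r := by
  refine ⟨hBA, fun v => ?_, fun v hv => ?_, fun u hu => ((hB r u).1 hu).1 rfl⟩
  · induction v using (measure h).wf.induction with
    | _ v ih =>
      by_cases hv : v = r
      · exact hv ▸ .refl
      · exact .head ((hB v (p v)).2 ⟨hv, rfl⟩) (ih _ (hp v hv))
  · have : {u // B v u} = {u // u = p v} := by
      simp only [hB, hv, ne_eq, not_false_eq_true, true_and]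
    rw [this, Nat.card_unique]

section CycComp

variable {t : ℕ} [NeZero t]

/-- `0 - 1` wraps around to the last part, so the predecessor of `(0, 1)` is `(t - 1, 0)`. -/
def bpExPred (t : ℕ) [NeZero t] (v : Fin t × Fin 2) : Fin t × Fin 2 :=
  (v.1 - 1, if v.1 = 0 then 0 else v.2)

def bpExIndex (t : ℕ) (v : Fin t × Fin 2) : ℕ := v.1.val + t * v.2.val

def bmExParent (t : ℕ) [NeZero t] (v : Fin t × Fin 2) : Fin t × Fin 2 :=
  if v.1 + 1 = 0 then (0, 0) else (v.1 + 1, v.2 + 1)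

def bmExHeight (t : ℕ) [NeZero t] (v : Fin t × Fin 2) : ℕ :=
  if v = (0, 0) then 0 else t - v.1.val

theorem bpEx_iff (u v : Fin t × Fin 2) : BpEx t u v ↔ v ≠ (0, 0) ∧ u = bpExPred t v := by
  obtain ⟨i, j⟩ := v
  obtain ⟨k, l⟩ := u
  simp only [BpEx, bpExPred, ne_eq, Prod.mk.injEq, eq_sub_iff_add_eq]
  fin_cases j <;> grind

theorem bpExIndex_bpExPred_lt {v : Fin t × Fin 2} (hv : v ≠ (0, 0)) :
    bpExIndex t (bpExPred t v) < bpExIndex t v := by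
  obtain ⟨i, j⟩ := v
  by_cases hi : i = 0
  · subst hi
    obtain rfl : j = 1 := by fin_cases j <;> simp_all
    simp [bpExIndex, bpExPred]
  · have := Fin.val_ne_zero_iff.2 hi
    simp only [bpExIndex, bpExPred, if_neg hi, Fin.val_sub_one_of_ne_zero hi]
    omega

theorem bmEx_iff (ht : 2 ≤ t) (v u : Fin t × Fin 2) :
    BmEx t v u ↔ v ≠ (0, 0) ∧ u = bmExParent t v := by
  obtain ⟨i, j⟩ := v
  obtain ⟨k, l⟩ := u
  have hroot : (0 : Fin t) + 1 ≠ 0 := by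
    rw [zero_add, ne_eq, Fin.one_eq_zero_iff]
    omega
  simp only [BmEx, bmExParent, ne_eq, Prod.mk.injEq]
  fin_cases j <;> grind

theorem bmExHeight_bmExParent_lt {v : Fin t × Fin 2} (hv : v ≠ (0, 0)) :
    bmExHeight t (bmExParent t v) < bmExHeight t v := by
  have := v.1.isLt
  unfold bmExHeight
  rw [if_neg hv]
  by_cases h : v.1 + 1 = 0
  · rw [bmExParent, if_pos h, if_pos rfl]
    omega
  · have hne : bmExParent t v ≠ (0, 0) := by simp [bmExParent, h]
    rw [if_neg hne, bmExParent, if_neg h, Fin.val_add_one_of_add_one_ne_zero h]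
    omega

theorem cycComp_of_bpEx {u v : Fin t × Fin 2} (h : BpEx t u v) : CycComp t u v := by
  rcases h with ⟨h, -, -⟩ | ⟨h, -, h', -⟩
  · exact h
  · exact h'.trans h.symm

theorem cycComp_of_bmEx {u v : Fin t × Fin 2} (h : BmEx t u v) : CycComp t u v := by
  rcases h with ⟨-, -, h, -⟩ | ⟨-, -, -, h, -⟩ | ⟨h, rfl⟩
  · exact h
  · exact h
  · exact h.symm

theorem not_bpEx_and_bmEx (x y : Fin t × Fin 2) : ¬ (BpEx t x y ∧ BmEx t x y) := by
  rintro ⟨⟨-, hnext, hkeep⟩ | ⟨hlast, hx, -, hy⟩,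
    ⟨hx', hy', -, -⟩ | ⟨hx', hy', -, -, hnext'⟩ | ⟨hlast', rfl⟩⟩ <;> simp_all

end CycComp

/-- The composition of a directed `t`-cycle (`t ≥ 2`) with `K̄₂`'s has a good
pair rooted at `u_{1,1}`, given by the explicit branchings above. -/
theorem stmt12 (t : ℕ) [NeZero t] (ht : 2 ≤ t) :
    IsOutBranching (CycComp t) (BpEx t) (0, 0) ∧
    IsInBranching (CycComp t) (BmEx t) (0, 0) ∧
    ∀ x y, ¬ (BpEx t x y ∧ BmEx t x y) :=
  ⟨(isInBranching_of_parent (bpExPred t) (bpExIndex t) (fun _ _ => cycComp_of_bpEx)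
      (fun v u => bpEx_iff u v) fun _ => bpExIndex_bpExPred_lt).swap,
    isInBranching_of_parent (bmExParent t) (bmExHeight t) (fun _ _ => cycComp_of_bmEx)
      (bmEx_iff ht) fun _ => bmExHeight_bmExParent_lt,
    not_bpEx_and_bmEx⟩
end

section
/- Let B⁻ be an in-branching rooted at r in a digraph D, let A ⊆ V(D) \ {r} be a set of vertices such that ur ∈ A(D) for the predecessor u (on the path to r in B⁻) of every vertex of A appearing on such paths. Then there exists an in-tree rooted at r spanning V(D) \ A whose arc set is contained in A(B⁻) ∪ {ur : u ∈ V(D) \ A}; i.e., one can 'shortcut' around vertices of A by rerouting their predecessors directly to r. -/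
variable {V : Type*}

/-!
Keep the arcs of `B⁻` between vertices outside `A` and replace each arc `uw` with `w ∈ A` by
`ur`. Every surviving vertex other than `r` still has exactly one out-arc, and following its
`B⁻`-path up to the first vertex of `A` (if any) and then jumping to `r` shows that `r` is reached.
-/

theorem Nat.card_subtype_eq_one_iff_existsUnique {α : Type*} {p : α → Prop} :
    Nat.card {a // p a} = 1 ↔ ∃! a, p a := by
  rw [Nat.card_eq_one_iff_exists]
  constructor
  · rintro ⟨⟨a, ha⟩, huniq⟩
    exact ⟨a, ha, fun b hb => congrArg Subtype.val (huniq ⟨b, hb⟩)⟩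
  · rintro ⟨a, ha, huniq⟩
    exact ⟨⟨a, ha⟩, fun b => Subtype.ext (huniq b.1 b.2)⟩

section Shortcut

variable {B : V → V → Prop} {A : Set V} {r : V}

def shortcut (B : V → V → Prop) (A : Set V) (r : V) (x y : {v : V // v ∉ A}) : Prop :=
  B x y ∨ (y.1 = r ∧ ∃ w ∈ A, B x w)

theorem existsUnique_shortcut (hrA : r ∉ A) {x : {v : V // v ∉ A}} (hx : ∃! u, B x u) :
    ∃! y, shortcut B A r x y := by
  obtain ⟨u, hu, huniq⟩ := hx
  by_cases huA : u ∈ A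
  · refine ⟨⟨r, hrA⟩, Or.inr ⟨rfl, u, huA, hu⟩, ?_⟩
    rintro ⟨y, hyA⟩ (hy | ⟨hy, -⟩)
    · exact absurd (huniq y hy ▸ huA) hyA
    · exact Subtype.ext hy
  · refine ⟨⟨u, huA⟩, Or.inl hu, ?_⟩
    rintro ⟨y, _⟩ (hy | ⟨-, w, hwA, hw⟩)
    · exact Subtype.ext (huniq y hy)
    · exact absurd (huniq w hw ▸ hwA) huA

theorem reflTransGen_shortcut (hrA : r ∉ A) {v : V} (hv : v ∉ A)
    (h : Relation.ReflTransGen B v r) :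
    Relation.ReflTransGen (shortcut B A r) ⟨v, hv⟩ ⟨r, hrA⟩ := by
  induction h using Relation.ReflTransGen.head_induction_on with
  | refl => rfl
  | @head v c hvc _ ih =>
    by_cases hcA : c ∈ A
    · exact .single (Or.inr ⟨rfl, c, hcA, hvc⟩)
    · exact .head (Or.inl hvc) (ih hcA)

theorem IsInBranching.shortcut {D : V → V → Prop} (hB : IsInBranching D B r) (hrA : r ∉ A)
    (hpred : ∀ u w, w ∈ A → B u w → D u r) :
    IsInBranching (fun x y : {v : V // v ∉ A} => D x.1 y.1) (shortcut B A r) ⟨r, hrA⟩ := by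
  obtain ⟨hsub, hreach, hcard, hroot⟩ := hB
  refine ⟨?_, fun v => reflTransGen_shortcut hrA v.2 (hreach v), fun v hv => ?_, ?_⟩
  · rintro x y (h | ⟨hy, w, hwA, hw⟩)
    · exact hsub _ _ h
    · exact hy ▸ hpred x w hwA hw
  · have hvr : v.1 ≠ r := fun h => hv (Subtype.ext h)
    exact Nat.card_subtype_eq_one_iff_existsUnique.2 <| existsUnique_shortcut hrA <|
      Nat.card_subtype_eq_one_iff_existsUnique.1 (hcard v hvr)
  · rintro y (h | ⟨-, w, -, hw⟩)
    exacts [hroot _ h, hroot w hw]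

end Shortcut

theorem stmt15_general (D Bm : V → V → Prop) (r : V)
    (hBm : IsInBranching D Bm r) (A : Set V) (hrA : r ∉ A)
    (hpred : ∀ u w, w ∈ A → Bm u w → D u r) :
    ∃ B' : {v : V // v ∉ A} → {v : V // v ∉ A} → Prop,
      IsInBranching (fun x y : {v : V // v ∉ A} => D x.1 y.1) B' ⟨r, hrA⟩ ∧
      ∀ x y : {v : V // v ∉ A}, B' x y → Bm x.1 y.1 ∨ y.1 = r :=
  ⟨shortcut Bm A r, hBm.shortcut hrA hpred, fun _ _ h => h.imp_right And.left⟩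

/-- Rerouting lemma: given an in-branching `Bm` of `D` rooted at `r` and a set
`A` of vertices avoiding `r` such that every `Bm`-predecessor of a vertex of
`A` has an arc of `D` directly to `r`, there is an in-branching of `D − A`
rooted at `r` all of whose arcs are arcs of `Bm` or arcs with head `r`. -/
theorem stmt15 [Fintype V] (D Bm : V → V → Prop) (r : V)
    (hBm : IsInBranching D Bm r) (A : Set V) (hrA : r ∉ A)
    (hpred : ∀ u w, w ∈ A → Bm u w → D u r) :
    ∃ B' : {v : V // v ∉ A} → {v : V // v ∉ A} → Prop,
      IsInBranching (fun x y : {v : V // v ∉ A} => D x.1 y.1) B' ⟨r, hrA⟩ ∧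
      ∀ x y : {v : V // v ∉ A}, B' x y → Bm x.1 y.1 ∨ y.1 = r :=
  stmt15_general D Bm r hBm A hrA hpred
end
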